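/- With the above notation, the function τ ↦ Γ(τ) is differentiable on (0, ∞) and for every τ > 0, Γ'(τ) = (T²/τ²) ∑_{k∈ℤ} λ_k k ∑_{p∈ℤ} ∑_{l∈ℤ} \overline{c_p} c_l ( φ̂'(a_{k,l}(τ)) φ̂(a_{k,p}(τ)) + φ̂'(a_{k,p}(τ)) φ̂(a_{k,l}(τ)) ), where φ̂' is the derivative of φ̂ and the double series converges absolutely. -/

import Mathlib

/-- The Fourier transform of the indicator function of `[-1/2, 1/2]`:
`φ̂(x) = sin(πx)/(πx)` for `x ≠ 0` and `φ̂(0) = 1`. -/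
noncomputable def phihat (x : ℝ) : ℝ :=
  if x = 0 then 1 else Real.sin (Real.pi * x) / (Real.pi * x)

/-! Since `λ` has finite support, `Γ` is a finite sum of the terms `λ_k ‖G_k(τ)‖²`, where
`G_k(τ) = F(kθ/τ)` and `F(u) = ∑_l c_l φ̂((T/θ)(l - u))`. As `φ̂ = sinc (π ·)` and its derivative
are bounded and `c ∈ ℓ¹`, `F` can be differentiated term by term; then
`(‖G‖²)' = 2 Re (conj G · G')`, and the Cauchy product of the absolutely convergent series
`conj G_k(τ)` and `∑_l c_l φ̂'(a_{k,l}(τ))` is the double series of the statement. -/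

open Filter Asymptotics ComplexConjugate

namespace Real

theorem hasDerivAt_sinc_zero : HasDerivAt sinc 0 0 := by
  rw [hasDerivAt_iff_isLittleO_nhds_zero]
  simp only [zero_add, sinc_zero, smul_zero, sub_zero]
  refine IsBigO.trans_isLittleO (g := fun h : ℝ => h ^ 2) ?_ (isLittleO_pow_id one_lt_two)
  refine IsBigO.of_bound (1 / 6) (Eventually.of_forall fun h => ?_)
  rcases eq_or_ne h 0 with rfl | hh
  · simp
  have hpos : 0 < |h| := abs_pos.2 hh
  rw [sinc_of_ne_zero hh, norm_eq_abs, norm_eq_abs, abs_sub_comm, one_sub_div hh, abs_div,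
    div_le_iff₀ hpos, abs_pow]
  calc |h - sin h| ≤ |h| ^ 3 / 6 := abs_sub_sin_le h
    _ = 1 / 6 * |h| ^ 2 * |h| := by ring

theorem hasDerivAt_sinc_of_ne_zero {x : ℝ} (hx : x ≠ 0) :
    HasDerivAt sinc ((x * cos x - sin x) / x ^ 2) x := by
  have h := (hasDerivAt_sin x).div (hasDerivAt_id x) hx
  refine (h.congr_of_eventuallyEq ((eventually_ne_nhds hx).mono fun y hy => ?_)).congr_deriv ?_
  · exact sinc_of_ne_zero hy
  · simp only [id]; ring

theorem differentiable_sinc : Differentiable ℝ sinc := fun x => by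
  rcases eq_or_ne x 0 with rfl | hx
  · exact hasDerivAt_sinc_zero.differentiableAt
  · exact (hasDerivAt_sinc_of_ne_zero hx).differentiableAt

theorem abs_mul_cos_sub_sin_le (x : ℝ) : |x * cos x - sin x| ≤ 2 * x ^ 2 := by
  rcases le_or_gt |x| 1 with hx | hx
  · have hcos : |cos x - 1| ≤ x ^ 2 / 2 := by
      rw [abs_sub_comm, abs_of_nonneg (sub_nonneg.2 (cos_le_one x))]
      linarith [one_sub_sq_div_two_le_cos (x := x)]
    have hcube : |x| ^ 3 ≤ x ^ 2 := by
      rw [← sq_abs x]; nlinarith [abs_nonneg x]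
    calc |x * cos x - sin x| = |x * (cos x - 1) + (x - sin x)| := by ring_nf
      _ ≤ |x| * |cos x - 1| + |x - sin x| := by rw [← abs_mul]; exact abs_add_le _ _
      _ ≤ |x| * (x ^ 2 / 2) + |x| ^ 3 / 6 :=
          add_le_add (mul_le_mul_of_nonneg_left hcos (abs_nonneg x)) (abs_sub_sin_le x)
      _ ≤ 2 * x ^ 2 := by rw [← sq_abs x] at *; nlinarith [abs_nonneg x]
  · calc |x * cos x - sin x| ≤ |x| * |cos x| + |sin x| := by rw [← abs_mul]; exact abs_sub _ _
      _ ≤ |x| * 1 + 1 :=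
          add_le_add (mul_le_mul_of_nonneg_left (abs_cos_le_one x) (abs_nonneg x))
            (abs_sin_le_one x)
      _ ≤ 2 * x ^ 2 := by rw [← sq_abs x]; nlinarith

theorem abs_deriv_sinc_le_two (x : ℝ) : |deriv sinc x| ≤ 2 := by
  rcases eq_or_ne x 0 with rfl | hx
  · simp [hasDerivAt_sinc_zero.deriv]
  rw [(hasDerivAt_sinc_of_ne_zero hx).deriv, abs_div, abs_pow, sq_abs,
    div_le_iff₀ (by positivity)]
  exact abs_mul_cos_sub_sin_le x

end Real

open Real

theorem phihat_eq_sinc (x : ℝ) : phihat x = sinc (π * x) := by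
  simp [phihat, sinc, pi_ne_zero]

theorem differentiable_phihat : Differentiable ℝ phihat := by
  simp_rw [funext phihat_eq_sinc]
  exact differentiable_sinc.comp (differentiable_id.const_mul π)

theorem abs_phihat_le_one (x : ℝ) : |phihat x| ≤ 1 :=
  phihat_eq_sinc x ▸ abs_sinc_le_one _

theorem abs_deriv_phihat_le (x : ℝ) : |deriv phihat x| ≤ 2 * π := by
  rw [funext phihat_eq_sinc, deriv_comp_mul_left, smul_eq_mul, abs_mul, abs_of_pos pi_pos,
    mul_comm]
  exact mul_le_mul_of_nonneg_right (abs_deriv_sinc_le_two _) pi_pos.le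

section Series

variable {ι : Type*} {c : ι → ℂ}

theorem summable_norm_mul_ofReal_of_abs_le (hc : Summable fun i => ‖c i‖) {g : ι → ℝ} {A : ℝ}
    (hg : ∀ i, |g i| ≤ A) : Summable fun i => ‖c i * (g i : ℂ)‖ :=
  .of_nonneg_of_le (fun _ => norm_nonneg _)
    (fun i => by
      rw [norm_mul, Complex.norm_real, norm_eq_abs]
      exact mul_le_mul_of_nonneg_left (hg i) (norm_nonneg _))
    (hc.mul_right A)

theorem hasDerivAt_tsum_mul_comp_sub (hc : Summable fun i => ‖c i‖) {f : ℝ → ℝ} {A B : ℝ}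
    (hf : Differentiable ℝ f) (hfA : ∀ y, |f y| ≤ A) (hfB : ∀ y, |deriv f y| ≤ B)
    (x : ι → ℝ) (u : ℝ) :
    HasDerivAt (fun u => ∑' i, c i * (f (x i - u) : ℂ))
      (-∑' i, c i * ((deriv f (x i - u) : ℝ) : ℂ)) u := by
  have h := hasDerivAt_tsum (hc.mul_right B) (y₀ := 0)
    (g' := fun i y => c i * ((-deriv f (x i - y) : ℝ) : ℂ))
    (fun i y => (((hf _).hasDerivAt.comp_const_sub (x i) y).ofReal_comp).const_mul (c i))
    (fun i y => by
      rw [norm_mul, Complex.norm_real, norm_eq_abs, abs_neg]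
      exact mul_le_mul_of_nonneg_left (hfB _) (norm_nonneg _))
    (summable_norm_mul_ofReal_of_abs_le hc fun i => hfA (x i - 0)).of_norm u
  simpa only [Complex.ofReal_neg, mul_neg, tsum_neg] using h

variable {u v : ι → ℝ}

theorem conj_mul_mul_ofReal_add (p l : ι) :
    conj (c p) * c l * ((v l * u p + v p * u l : ℝ) : ℂ) =
      conj (c p * u p) * (c l * v l) + conj (c p * v p) * (c l * u l) := by
  simp only [map_mul, Complex.conj_ofReal, Complex.ofReal_add, Complex.ofReal_mul]
  ring

theorem summable_norm_conj_mul_mul_ofReal_add (hu : Summable fun i => ‖c i * u i‖)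
    (hv : Summable fun i => ‖c i * v i‖) :
    Summable fun pl : ι × ι =>
      ‖conj (c pl.1) * c pl.2 * ((v pl.2 * u pl.1 + v pl.1 * u pl.2 : ℝ) : ℂ)‖ := by
  have hu' : Summable fun i => ‖conj (c i * u i)‖ := by simpa only [Complex.norm_conj] using hu
  have hv' : Summable fun i => ‖conj (c i * v i)‖ := by simpa only [Complex.norm_conj] using hv
  refine .of_nonneg_of_le (fun _ => norm_nonneg _) (fun pl => ?_)
    ((hu'.mul_norm hv).add (hv'.mul_norm hu))
  rw [conj_mul_mul_ofReal_add]
  exact norm_add_le _ _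

theorem tsum_conj_mul_mul_ofReal_add (hu : Summable fun i => ‖c i * u i‖)
    (hv : Summable fun i => ‖c i * v i‖) :
    ∑' pl : ι × ι, conj (c pl.1) * c pl.2 * ((v pl.2 * u pl.1 + v pl.1 * u pl.2 : ℝ) : ℂ) =
      ((2 * (conj (∑' i, c i * u i) * ∑' i, c i * v i).re : ℝ) : ℂ) := by
  have hu' : Summable fun i => ‖conj (c i * u i)‖ := by simpa only [Complex.norm_conj] using hu
  have hv' : Summable fun i => ‖conj (c i * v i)‖ := by simpa only [Complex.norm_conj] using hv
  simp_rw [conj_mul_mul_ofReal_add]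
  rw [(summable_mul_of_summable_norm hu' hv).tsum_add (summable_mul_of_summable_norm hv' hu),
    ← tsum_mul_tsum_of_summable_norm hu' hv, ← tsum_mul_tsum_of_summable_norm hv' hu,
    ← Complex.conj_tsum, ← Complex.conj_tsum, ← Complex.add_conj, map_mul, Complex.conj_conj]
  ring

end Series

theorem hasDerivAt_tsum_of_notMem_eq_zero {ι 𝕜 F : Type*} [NontriviallyNormedField 𝕜]
    [NormedAddCommGroup F] [NormedSpace 𝕜 F] (S : Finset ι) {f : ι → 𝕜 → F} {f' : ι → F}
    {x : 𝕜} (hf : ∀ i, HasDerivAt (f i) (f' i) x) (hS : ∀ i ∉ S, f i = 0) :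
    HasDerivAt (fun y => ∑' i, f i y) (∑' i, f' i) x := by
  have hS' : ∀ i ∉ S, f' i = 0 := fun i hi =>
    (hf i).unique (by rw [hS i hi]; exact hasDerivAt_const x (0 : F))
  rw [tsum_eq_sum hS']
  refine (HasDerivAt.fun_sum fun i _ => hf i).congr_of_eventuallyEq
    (Eventually.of_forall fun y => tsum_eq_sum fun i hi => by rw [hS i hi, Pi.zero_apply])

theorem hasDerivAt_tsum_mul_phihat {c : ℤ → ℂ} (hc : Summable fun l : ℤ => ‖c l‖)
    {T θ τ : ℝ} (hθ : θ ≠ 0) (hτ : τ ≠ 0) (k : ℤ) :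
    HasDerivAt (fun s => ∑' l : ℤ, c l * (phihat ((T / θ) * ((l : ℝ) - (k : ℝ) * θ / s)) : ℂ))
      (((T * k / τ ^ 2 : ℝ) : ℂ) *
        ∑' l : ℤ, c l * ((deriv phihat ((T / θ) * ((l : ℝ) - (k : ℝ) * θ / τ)) : ℝ) : ℂ)) τ := by
  have hderiv (y : ℝ) : deriv (fun y => phihat (T / θ * y)) y = T / θ * deriv phihat (T / θ * y) :=
    deriv_comp_mul_left _ _ _
  have hF := hasDerivAt_tsum_mul_comp_sub hc (f := fun y => phihat (T / θ * y)) (A := 1)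
    (B := |T / θ| * (2 * π)) (differentiable_phihat.comp (differentiable_id.const_mul _))
    (fun y => abs_phihat_le_one _)
    (fun y => by
      rw [hderiv, abs_mul]
      exact mul_le_mul_of_nonneg_left (abs_deriv_phihat_le _) (abs_nonneg _))
    (fun l : ℤ => (l : ℝ)) (k * θ / τ)
  have hinner : HasDerivAt (fun s : ℝ => k * θ / s) (-(k * θ) / τ ^ 2) τ := by
    simpa only [div_eq_mul_inv, neg_mul, mul_neg] using (hasDerivAt_inv hτ).const_mul ((k : ℝ) * θ)
  refine (hF.scomp τ hinner).congr_deriv ?_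
  simp only [hderiv, Complex.ofReal_mul, mul_left_comm (c _), tsum_mul_left, Complex.real_smul]
  push_cast
  generalize ∑' l : ℤ, c l * _ = S
  have hθ' : (θ : ℂ) ≠ 0 := Complex.ofReal_ne_zero.2 hθ
  have hτ' : (τ : ℂ) ≠ 0 := Complex.ofReal_ne_zero.2 hτ
  field_simp

theorem stmt_11_general (T θ : ℝ) (hθ : 0 < θ)
    (c : ℤ → ℂ) (hc : Summable fun l : ℤ => ‖c l‖)
    (N : ℕ) (lam : ℤ → ℝ)
    (hsupp : ∀ k : ℤ, (N : ℤ) < |k| → lam k = 0)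
    (τ : ℝ) (hτ : 0 < τ) :
    ∃ D : ℝ,
      HasDerivAt (fun s : ℝ => T * ∑' k : ℤ, lam k *
          ‖∑' l : ℤ, c l * (phihat ((T / θ) * ((l : ℝ) - (k : ℝ) * θ / s)) : ℂ)‖ ^ 2) D τ ∧
      (∀ k : ℤ, Summable fun pl : ℤ × ℤ =>
        ‖(starRingEnd ℂ) (c pl.1) * c pl.2 *
          ((deriv phihat ((T / θ) * ((pl.2 : ℝ) - (k : ℝ) * θ / τ)) *
              phihat ((T / θ) * ((pl.1 : ℝ) - (k : ℝ) * θ / τ)) +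
            deriv phihat ((T / θ) * ((pl.1 : ℝ) - (k : ℝ) * θ / τ)) *
              phihat ((T / θ) * ((pl.2 : ℝ) - (k : ℝ) * θ / τ)) : ℝ) : ℂ)‖) ∧
      (D : ℂ) = ((T ^ 2 / τ ^ 2 : ℝ) : ℂ) * ∑' k : ℤ, ((lam k * (k : ℝ) : ℝ) : ℂ) *
        ∑' pl : ℤ × ℤ, (starRingEnd ℂ) (c pl.1) * c pl.2 *
          ((deriv phihat ((T / θ) * ((pl.2 : ℝ) - (k : ℝ) * θ / τ)) *
              phihat ((T / θ) * ((pl.1 : ℝ) - (k : ℝ) * θ / τ)) +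
            deriv phihat ((T / θ) * ((pl.1 : ℝ) - (k : ℝ) * θ / τ)) *
              phihat ((T / θ) * ((pl.2 : ℝ) - (k : ℝ) * θ / τ)) : ℝ) : ℂ) := by
  have hu (k : ℤ) := summable_norm_mul_ofReal_of_abs_le hc fun l : ℤ =>
    abs_phihat_le_one ((T / θ) * ((l : ℝ) - (k : ℝ) * θ / τ))
  have hv (k : ℤ) := summable_norm_mul_ofReal_of_abs_le hc fun l : ℤ =>
    abs_deriv_phihat_le ((T / θ) * ((l : ℝ) - (k : ℝ) * θ / τ))
  have hoff : ∀ k ∉ Finset.Icc (-(N : ℤ)) N, (fun s : ℝ => lam k *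
      ‖∑' l : ℤ, c l * (phihat ((T / θ) * ((l : ℝ) - (k : ℝ) * θ / s)) : ℂ)‖ ^ 2) = 0 := by
    intro k hk
    rw [Finset.mem_Icc, ← abs_le, not_le] at hk
    ext s
    rw [hsupp k hk, zero_mul, Pi.zero_apply]
  have hterm (k : ℤ) :=
    ((hasDerivAt_tsum_mul_phihat hc (T := T) hθ.ne' hτ.ne' k).norm_sq).const_mul (lam k)
  have hΓ := (hasDerivAt_tsum_of_notMem_eq_zero _ hterm hoff).const_mul T
  have hsum (k : ℤ) := summable_norm_conj_mul_mul_ofReal_add (hu k) (hv k)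
  have hval (k : ℤ) := tsum_conj_mul_mul_ofReal_add (hu k) (hv k)
  refine ⟨_, hΓ, hsum, ?_⟩
  simp only [hval, ← Complex.ofReal_mul, ← Complex.ofReal_tsum, Complex.ofReal_inj]
  rw [← tsum_mul_left (a := T), ← tsum_mul_left (a := T ^ 2 / τ ^ 2)]
  refine tsum_congr fun k => ?_
  rw [Complex.inner, mul_assoc, Complex.re_ofReal_mul, mul_comm (∑' _ : ℤ, _)]
  ring

/-- With `a_{k,l}(τ) = (T/θ)(l - kθ/τ)` and
`Γ(τ) = T ∑_k λ_k |∑_l c_l φ̂(a_{k,l}(τ))|²`, the function `Γ` is differentiable on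
`(0, ∞)` with `Γ'(τ) = (T²/τ²) ∑_k λ_k k ∑_{p,l} c̄_p c_l
(φ̂'(a_{k,l}(τ)) φ̂(a_{k,p}(τ)) + φ̂'(a_{k,p}(τ)) φ̂(a_{k,l}(τ)))`,
the double series converging absolutely. -/
theorem stmt_11 (T θ : ℝ) (hT : 0 < T) (hθ : 0 < θ)
    (c : ℤ → ℂ) (hc : Summable fun l : ℤ => ‖c l‖)
    (N : ℕ) (hN : 0 < N) (lam : ℤ → ℝ)
    (hlam0 : lam 0 = 0) (hsym : ∀ k : ℤ, lam (-k) = lam k)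
    (hrange : ∀ k : ℤ, 0 ≤ lam k ∧ lam k ≤ 1)
    (hsupp : ∀ k : ℤ, (N : ℤ) < |k| → lam k = 0)
    (τ : ℝ) (hτ : 0 < τ) :
    ∃ D : ℝ,
      HasDerivAt (fun s : ℝ => T * ∑' k : ℤ, lam k *
          ‖∑' l : ℤ, c l * (phihat ((T / θ) * ((l : ℝ) - (k : ℝ) * θ / s)) : ℂ)‖ ^ 2) D τ ∧
      (∀ k : ℤ, Summable fun pl : ℤ × ℤ =>
        ‖(starRingEnd ℂ) (c pl.1) * c pl.2 *
          ((deriv phihat ((T / θ) * ((pl.2 : ℝ) - (k : ℝ) * θ / τ)) *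
              phihat ((T / θ) * ((pl.1 : ℝ) - (k : ℝ) * θ / τ)) +
            deriv phihat ((T / θ) * ((pl.1 : ℝ) - (k : ℝ) * θ / τ)) *
              phihat ((T / θ) * ((pl.2 : ℝ) - (k : ℝ) * θ / τ)) : ℝ) : ℂ)‖) ∧
      (D : ℂ) = ((T ^ 2 / τ ^ 2 : ℝ) : ℂ) * ∑' k : ℤ, ((lam k * (k : ℝ) : ℝ) : ℂ) *
        ∑' pl : ℤ × ℤ, (starRingEnd ℂ) (c pl.1) * c pl.2 *
          ((deriv phihat ((T / θ) * ((pl.2 : ℝ) - (k : ℝ) * θ / τ)) *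
              phihat ((T / θ) * ((pl.1 : ℝ) - (k : ℝ) * θ / τ)) +
            deriv phihat ((T / θ) * ((pl.1 : ℝ) - (k : ℝ) * θ / τ)) *
              phihat ((T / θ) * ((pl.2 : ℝ) - (k : ℝ) * θ / τ)) : ℝ) : ℂ) :=
  stmt_11_general T θ hθ c hc N lam hsupp τ hτ
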